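/- arXiv:1312.0551 — 2 statements merged into one kernel-verified Lean document; each statement's English description precedes it below -/
import Mathlib

section
/- For every n > 0, the map w ↦ w·ψ(w) (concatenation of w with ψ(w)) is a bijection from the set of Dyck words of type B of semilength n onto the set of Dyck words w' of type A of semilength 2n satisfying ψ(w') = w' (the centrally symmetric Dyck words). -/
/-- A Dyck word of type A of semilength `n`: a word of length `2n` over `{u, r}`
(`true` = `u`, `false` = `r`) with exactly `n` `u`'s and `n` `r`'s, every prefix of
which contains at least as many `u`'s as `r`'s. -/
def IsDyckWordA (n : ℕ) (w : List Bool) : Prop :=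
  w.length = 2 * n ∧ w.count true = n ∧ w.count false = n ∧
    ∀ ℓ : ℕ, (w.take ℓ).count false ≤ (w.take ℓ).count true

/-- A Dyck word of type B of semilength `n`: a word of length `2n` over `{u, r}`
every prefix of which contains at least as many `u`'s as `r`'s. -/
def IsDyckWordB (n : ℕ) (w : List Bool) : Prop :=
  w.length = 2 * n ∧ ∀ ℓ : ℕ, (w.take ℓ).count false ≤ (w.take ℓ).count true

/-- The map `ψ`: replace every `u` by `r` and every `r` by `u`, then reverse the word. -/
def psi (w : List Bool) : List Bool :=
  (w.map (fun b => !b)).reverse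

/-!
The prefix of length `|w| + k` of `w ψ(w)` is `w₁ (w₂ ψ(w₂))`, where `w₂` is the suffix of
length `k` of `w`. Since `w₂ ψ(w₂)` contains as many `u`'s as `r`'s, this prefix satisfies
the ballot condition exactly when `w₁` does. Conversely a centrally symmetric word of
length `4n` is the image of its first half.
-/

def IsBallotWord (w : List Bool) : Prop :=
  ∀ ℓ : ℕ, (w.take ℓ).count false ≤ (w.take ℓ).count true

theorem IsBallotWord.take {w : List Bool} (hw : IsBallotWord w) (m : ℕ) :
    IsBallotWord (w.take m) := fun ℓ => by
  rw [List.take_take]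
  exact hw _

@[simp]
theorem length_psi (w : List Bool) : (psi w).length = w.length := by simp [psi]

theorem count_psi (w : List Bool) (b : Bool) : (psi w).count b = w.count (!b) := by
  rw [psi, List.count_reverse, ← Bool.not_not b, List.count_map_of_injective _ _
    (fun x y h => by simpa using h), Bool.not_not]

@[simp]
theorem psi_psi (w : List Bool) : psi (psi w) = w := by
  simp [psi, List.map_reverse, Function.comp_def]

theorem psi_append (v w : List Bool) : psi (v ++ w) = psi w ++ psi v := by
  simp [psi]

theorem count_append_psi (w : List Bool) (b : Bool) : (w ++ psi w).count b = w.length := by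
  rw [List.count_append, count_psi, add_comm, List.count_not_add_count]

theorem take_psi (w : List Bool) (k : ℕ) :
    (psi w).take k = psi (w.drop (w.length - k)) := by
  rw [psi, List.take_reverse, List.length_map, ← List.map_drop, psi]

theorem psi_take (w : List Bool) (k : ℕ) : psi (w.take k) = (psi w).drop (w.length - k) := by
  have h := take_psi (psi w) k
  rw [psi_psi, length_psi] at h
  rw [h, psi_psi]

theorem take_length_add_append_psi (w : List Bool) (k : ℕ) :
    (w ++ psi w).take (w.length + k) =
      w.take (w.length - k) ++ (w.drop (w.length - k) ++ psi (w.drop (w.length - k))) := by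
  rw [List.take_append, List.take_of_length_le (by omega), Nat.add_sub_cancel_left, take_psi,
    ← List.append_assoc, List.take_append_drop]

theorem IsBallotWord.append_psi {w : List Bool} (hw : IsBallotWord w) :
    IsBallotWord (w ++ psi w) := by
  intro ℓ
  rcases le_or_gt ℓ w.length with hℓ | hℓ
  · rw [List.take_append_of_le_length hℓ]
    exact hw ℓ
  · obtain ⟨k, rfl⟩ := Nat.exists_eq_add_of_le hℓ.le
    rw [take_length_add_append_psi, List.count_append, List.count_append (l₁ := w.take _),
      count_append_psi, count_append_psi]
    exact Nat.add_le_add_right (hw _) _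

theorem append_psi_take_of_psi_eq {w : List Bool} {n : ℕ} (hw : psi w = w)
    (hlen : w.length = 2 * n) : w.take n ++ psi (w.take n) = w := by
  rw [psi_take, hw, hlen, show 2 * n - n = n by omega, List.take_append_drop]

theorem concat_psi_bijOn_general (n : ℕ) :
    Set.BijOn (fun w => w ++ psi w) {w | IsDyckWordB n w}
      {w' | IsDyckWordA (2 * n) w' ∧ psi w' = w'} := by
  refine ⟨?_, ?_, ?_⟩
  · rintro w ⟨hlen, hw⟩
    refine ⟨⟨?_, ?_, ?_, IsBallotWord.append_psi hw⟩, ?_⟩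
    · rw [List.length_append, length_psi, hlen]
      ring
    · rw [count_append_psi, hlen]
    · rw [count_append_psi, hlen]
    · rw [psi_append, psi_psi]
  · rintro v ⟨hv, -⟩ w ⟨hw, -⟩ heq
    exact List.append_inj_left heq (hv.trans hw.symm)
  · rintro w ⟨⟨hlen, -, -, hw⟩, hpsi⟩
    refine ⟨w.take (2 * n), ⟨by rw [List.length_take, hlen]; omega, IsBallotWord.take hw _⟩, ?_⟩
    exact append_psi_take_of_psi_eq hpsi hlen

theorem concat_psi_bijOn (n : ℕ) (hn : 0 < n) :
    Set.BijOn (fun w => w ++ psi w) {w | IsDyckWordB n w}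
      {w' | IsDyckWordA (2 * n) w' ∧ psi w' = w'} :=
  concat_psi_bijOn_general n
end

section
/- For every n > 0, the number of regular elements of the lattice D_n^B (elements h with (h^c)^c = h, where h^c is the pseudocomplement) is exactly 2^n. -/
/-- Height sequences of Dyck paths of type B of semilength `n` (written 0-indexed):
lists `(h_1, …, h_k)` with `1 ≤ k ≤ n`, `h_i ≥ i` for `i ∈ [k]`,
`h_1 ≤ h_2 ≤ … ≤ h_{k-1} ≤ 2n - k`, and `h_k ∈ {2n - k, 2n - k + 1}`. -/
def IsHeightSeqB (n : ℕ) (h : List ℕ) : Prop :=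
  1 ≤ h.length ∧ h.length ≤ n ∧
    (∀ i < h.length, i + 1 ≤ h.getD i 0) ∧
    (∀ i : ℕ, i + 2 < h.length → h.getD i 0 ≤ h.getD (i + 1) 0) ∧
    (2 ≤ h.length → h.getD (h.length - 2) 0 ≤ 2 * n - h.length) ∧
    (h.getD (h.length - 1) 0 = 2 * n - h.length ∨
      h.getD (h.length - 1) 0 = 2 * n - h.length + 1)

/-- The dominance order on height sequences of type B:
`(h_1, …, h_k) ≤_D (h'_1, …, h'_{k'})` iff `k ≥ k'` and `h_i ≤ h'_i` for all `i ∈ [k']`. -/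
def DomLeB (a b : List ℕ) : Prop :=
  b.length ≤ a.length ∧ ∀ j < b.length, a.getD j 0 ≤ b.getD j 0

/-- The `j`-th entry (0-indexed) of the meet `a ∧_D b` in `D_n^B`. -/
def meetEntryB (a b : List ℕ) (j : ℕ) : ℕ :=
  if j < a.length then
    (if j < b.length then min (a.getD j 0) (b.getD j 0) else a.getD j 0)
  else b.getD j 0

/-- `a ∧_D b ≤_D c` in `D_n^B`, via the explicit description of the meet. -/
def MeetLeB (a b c : List ℕ) : Prop :=
  c.length ≤ max a.length b.length ∧ ∀ j < c.length, meetEntryB a b j ≤ c.getD j 0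

/-- The least element `(1, 2, …, n)` of `D_n^B`. -/
def botB (n : ℕ) : List ℕ :=
  List.ofFn (fun i : Fin n => (i : ℕ) + 1)

/-- `z` is the pseudocomplement of `x` in `D_n^B`: the greatest element `z` of `D_n^B`
with `x ∧_D z ≤_D (1, 2, …, n)`. -/
def IsPseudocomplementB (n : ℕ) (x z : List ℕ) : Prop :=
  IsHeightSeqB n z ∧ MeetLeB x z (botB n) ∧
    ∀ w : List ℕ, IsHeightSeqB n w → MeetLeB x w (botB n) → DomLeB w z

/-!
Call a position `j` of a height sequence *touching* when the path meets the bottom element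
`(1, …, n)` there. The meet of `x` and `w` is the bottom element exactly when every position is
touched by `x` or by `w`, so the pseudocomplement of `x` is the greatest element touching every
position that `x` does not touch. For each set `T` of positions this greatest element
`regularB n T` exists and touches exactly `T`, hence pseudocomplementation acts on touching sets
as complementation in `[0, n)`, and `T ↦ regularB n T` is a bijection from the subsets of
`[0, n)` onto the regular elements.
-/

open Finset

theorem IsHeightSeqB.getD_le_getD {n : ℕ} {w : List ℕ} (hw : IsHeightSeqB n w) {i j : ℕ}
    (hji : j ≤ i) (hi : i < w.length) : w.getD j 0 ≤ w.getD i 0 := by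
  obtain ⟨-, -, -, hmono, hpen, hlast⟩ := hw
  have chain : ∀ i, j ≤ i → i + 2 ≤ w.length → w.getD j 0 ≤ w.getD i 0 := by
    intro i hji
    induction i, hji using Nat.le_induction with
    | base => exact fun _ => le_rfl
    | succ i _ ih => exact fun h => (ih (by omega)).trans (hmono i (by omega))
  rcases Nat.lt_or_ge (i + 1) w.length with h | h
  · exact chain i hji h
  obtain rfl | hji := eq_or_lt_of_le hji
  · rfl
  obtain rfl : i = w.length - 1 := by omega
  -- the penultimate entry is at most `2n - k`, the last one at least `2n - k`
  have h₁ : w.getD j 0 ≤ w.getD (w.length - 2) 0 := chain _ (by omega) (by omega)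
  have h₂ := hpen (by omega)
  rcases hlast with h | h <;> omega

theorem IsHeightSeqB.getD_le_two_mul_sub {n : ℕ} {w : List ℕ} (hw : IsHeightSeqB n w) {j : ℕ}
    (hj : j < w.length) : w.getD j 0 ≤ 2 * n - j := by
  have := hw.getD_le_getD (i := w.length - 1) (j := j) (by omega) (by omega)
  obtain ⟨-, hk, -, -, -, hlast⟩ := hw
  rcases hlast with h | h <;> omega

theorem DomLeB.antisymm {a b : List ℕ} (hab : DomLeB a b) (hba : DomLeB b a) : a = b := by
  refine List.ext_getElem (le_antisymm hba.1 hab.1) fun i hia hib => ?_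
  have h₁ := hab.2 i hib
  have h₂ := hba.2 i hia
  rw [List.getD_eq_getElem _ _ hia, List.getD_eq_getElem _ _ hib] at h₁ h₂
  omega

theorem IsPseudocomplementB.unique {n : ℕ} {x z z' : List ℕ} (h : IsPseudocomplementB n x z)
    (h' : IsPseudocomplementB n x z') : z = z' :=
  (h'.2.2 z h.1 h.2.1).antisymm (h.2.2 z' h'.1 h'.2.1)

theorem List.getD_ofFn {α : Type*} {m : ℕ} (f : Fin m → α) (d : α) {i : ℕ} (h : i < m) :
    (List.ofFn f).getD i d = f ⟨i, h⟩ := by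
  rw [List.getD_eq_getElem _ _ (by simpa using h), List.getElem_ofFn]

theorem botB_length (n : ℕ) : (botB n).length = n := List.length_ofFn

theorem botB_getD {n j : ℕ} (h : j < n) : (botB n).getD j 0 = j + 1 :=
  List.getD_ofFn _ 0 h

/-- Positions are 0-indexed, so `x` touches the bottom path `(1, …, n)` at `j` when its entry
there is `j + 1`; writing `≤` makes the definition meaningful for arbitrary lists. -/
def touchSetB (n : ℕ) (x : List ℕ) : Finset ℕ :=
  (range n).filter fun j => j < x.length ∧ x.getD j 0 ≤ j + 1

theorem mem_touchSetB {n j : ℕ} {x : List ℕ} :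
    j ∈ touchSetB n x ↔ j < n ∧ j < x.length ∧ x.getD j 0 ≤ j + 1 := by
  rw [touchSetB, mem_filter, mem_range]

theorem meetLeB_botB_iff {n : ℕ} {x w : List ℕ} :
    MeetLeB x w (botB n) ↔ range n \ touchSetB n x ⊆ touchSetB n w := by
  simp only [MeetLeB, botB_length, subset_iff, mem_sdiff, mem_range, mem_touchSetB]
  constructor
  · rintro ⟨hlen, hle⟩ j ⟨hj, hx⟩
    have := hle j hj
    rw [botB_getD hj, meetEntryB] at this
    split_ifs at this <;> omega
  · intro h
    refine ⟨?_, fun j hj => ?_⟩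
    · rcases Nat.eq_zero_or_pos n with rfl | hn
      · exact Nat.zero_le _
      by_contra! hlt
      have := @h (n - 1) ⟨by omega, fun h' => by omega⟩
      omega
    · rw [botB_getD hj, meetEntryB]
      by_cases hx : j < x.length ∧ x.getD j 0 ≤ j + 1
      · split_ifs <;> omega
      · have := @h j ⟨hj, fun h' => hx h'.2⟩
        split_ifs <;> omega

/-- `sInf ∅ = 0` in `ℕ`, so this is meaningful only when some `t ∈ T` satisfies `j ≤ t`. -/
noncomputable def nextB (T : Finset ℕ) (j : ℕ) : ℕ :=
  sInf {t | t ∈ T ∧ j ≤ t} + 1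

theorem exists_nextB_eq {T : Finset ℕ} {j : ℕ} (hj : j < T.sup (· + 1)) :
    ∃ t ∈ T, j ≤ t ∧ nextB T j = t + 1 := by
  obtain ⟨t, ht, hjt⟩ := Finset.lt_sup_iff.mp hj
  obtain ⟨h₁, h₂⟩ := Nat.sInf_mem (s := {t | t ∈ T ∧ j ≤ t}) ⟨t, ht, by omega⟩
  exact ⟨_, h₁, h₂, rfl⟩

theorem nextB_le {T : Finset ℕ} {j t : ℕ} (ht : t ∈ T) (hjt : j ≤ t) : nextB T j ≤ t + 1 :=
  Nat.succ_le_succ (Nat.sInf_le ⟨ht, hjt⟩)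

theorem succ_le_sup_succ {T : Finset ℕ} {t : ℕ} (ht : t ∈ T) : t + 1 ≤ T.sup (· + 1) :=
  Finset.le_sup (f := fun t => t + 1) ht

/-- For `T ⊆ [0, n)` and `m = T.sup (· + 1)`, the greatest element touching the bottom path at
every position of `T`: before position `m` each entry is `1 +` the next position in `T`; if
`m < n` the path ends at position `m` with the larger admissible last entry `2n - m`, and if
`m = n` it has full length. -/
noncomputable def regularB (n : ℕ) (T : Finset ℕ) : List ℕ :=
  List.ofFn fun j : Fin (min (T.sup (· + 1) + 1) n) =>
    if (j : ℕ) < T.sup (· + 1) then nextB T j else 2 * n - T.sup (· + 1)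

section regularB

variable {n : ℕ} {T : Finset ℕ}

theorem length_regularB : (regularB n T).length = min (T.sup (· + 1) + 1) n :=
  List.length_ofFn

theorem getD_regularB {j : ℕ} (hj : j < min (T.sup (· + 1) + 1) n) :
    (regularB n T).getD j 0 =
      if j < T.sup (· + 1) then nextB T j else 2 * n - T.sup (· + 1) :=
  List.getD_ofFn _ 0 hj

theorem sup_succ_le (hT : T ⊆ range n) : T.sup (· + 1) ≤ n :=
  Finset.sup_le fun _ ht => mem_range.mp (hT ht)

theorem touchSetB_regularB (hT : T ⊆ range n) : touchSetB n (regularB n T) = T := by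
  have hm := sup_succ_le hT
  ext j
  rw [mem_touchSetB, length_regularB]
  constructor
  · rintro ⟨hjn, hjl, hle⟩
    rw [getD_regularB hjl] at hle
    split_ifs at hle with hjm
    · obtain ⟨t, ht, hjt, he⟩ := exists_nextB_eq hjm
      obtain rfl : t = j := by omega
      exact ht
    · omega
  · intro hj
    have := succ_le_sup_succ hj
    have hjn := mem_range.mp (hT hj)
    refine ⟨hjn, by omega, ?_⟩
    rw [getD_regularB (by omega), if_pos (by omega)]
    exact nextB_le hj le_rfl

theorem isHeightSeqB_regularB (hn : 0 < n) (hT : T ⊆ range n) :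
    IsHeightSeqB n (regularB n T) := by
  have hm := sup_succ_le hT
  rw [IsHeightSeqB, length_regularB]
  refine ⟨by omega, by omega, fun i hi => ?_, fun i hi => ?_, fun h2 => ?_, ?_⟩
  · rw [getD_regularB hi]
    split_ifs with h
    · obtain ⟨t, -, hit, he⟩ := exists_nextB_eq h
      omega
    · omega
  · rw [getD_regularB (by omega), getD_regularB (by omega), if_pos (by omega),
      if_pos (by omega)]
    obtain ⟨t, ht, hit, he⟩ := exists_nextB_eq (show i + 1 < T.sup (· + 1) by omega)
    exact he ▸ nextB_le ht (by omega)
  · rw [getD_regularB (by omega), if_pos (by omega)]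
    obtain ⟨t, ht, -, he⟩ :=
      exists_nextB_eq (show min (T.sup (· + 1) + 1) n - 2 < T.sup (· + 1) by omega)
    have := succ_le_sup_succ ht
    omega
  · rw [getD_regularB (by omega)]
    split_ifs with h
    · obtain ⟨t, ht, hit, he⟩ := exists_nextB_eq h
      have := mem_range.mp (hT ht)
      omega
    · omega

theorem domLeB_regularB (hT : T ⊆ range n) {w : List ℕ} (hw : IsHeightSeqB n w)
    (hTw : T ⊆ touchSetB n w) : DomLeB w (regularB n T) := by
  have hm := sup_succ_le hT
  have touch t (ht : t ∈ T) : t < w.length ∧ w.getD t 0 ≤ t + 1 := (mem_touchSetB.mp (hTw ht)).2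
  have hlen : min (T.sup (· + 1) + 1) n ≤ w.length := by
    rcases Nat.eq_zero_or_pos (T.sup (· + 1)) with h0 | h0
    · have := hw.1
      omega
    obtain ⟨t, ht, hmt, -⟩ := exists_nextB_eq (show T.sup (· + 1) - 1 < T.sup (· + 1) by omega)
    have := succ_le_sup_succ ht
    obtain ⟨htw, hwt⟩ := touch t ht
    by_contra hlt
    -- otherwise `t = max T` is the last position of `w`, whose entry is at least `2n - (t + 1)`
    obtain rfl : t = w.length - 1 := by omega
    obtain ⟨-, hk, -, -, -, hlast⟩ := hw
    rcases hlast with h | h <;> omega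
  refine ⟨length_regularB ▸ hlen, fun j hj => ?_⟩
  rw [length_regularB] at hj
  rw [getD_regularB hj]
  split_ifs with hjm
  · obtain ⟨t, ht, hjt, he⟩ := exists_nextB_eq hjm
    obtain ⟨htw, hwt⟩ := touch t ht
    rw [he]
    exact (hw.getD_le_getD hjt htw).trans hwt
  · have := hw.getD_le_two_mul_sub (j := j) (by omega)
    omega

end regularB

theorem isPseudocomplementB_regularB {n : ℕ} (hn : 0 < n) (x : List ℕ) :
    IsPseudocomplementB n x (regularB n (range n \ touchSetB n x)) := by
  have hT : range n \ touchSetB n x ⊆ range n := sdiff_subset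
  refine ⟨isHeightSeqB_regularB hn hT, ?_, fun w hw hxw => domLeB_regularB hT hw ?_⟩
  · rw [meetLeB_botB_iff, touchSetB_regularB hT]
  · rwa [meetLeB_botB_iff] at hxw

theorem isPseudocomplementB_regularB_sdiff {n : ℕ} (hn : 0 < n) {S : Finset ℕ}
    (hS : S ⊆ range n) : IsPseudocomplementB n (regularB n S) (regularB n (range n \ S)) := by
  simpa only [touchSetB_regularB hS] using isPseudocomplementB_regularB hn (regularB n S)

theorem isPseudocomplementB_sdiff_regularB {n : ℕ} (hn : 0 < n) {S : Finset ℕ}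
    (hS : S ⊆ range n) : IsPseudocomplementB n (regularB n (range n \ S)) (regularB n S) := by
  simpa only [Finset.sdiff_sdiff_eq_self hS] using
    isPseudocomplementB_regularB_sdiff hn (sdiff_subset : range n \ S ⊆ range n)

theorem setOf_regular_eq_image_regularB {n : ℕ} (hn : 0 < n) :
    {h : List ℕ | IsHeightSeqB n h ∧
      ∃ hc hcc : List ℕ, IsPseudocomplementB n h hc ∧
        IsPseudocomplementB n hc hcc ∧ hcc = h} = regularB n '' ↑(range n).powerset := by
  ext x
  simp only [Set.mem_ofPred_eq, Set.mem_image, coe_powerset, Set.mem_preimage,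
    Set.mem_powerset_iff, coe_subset]
  constructor
  · rintro ⟨-, hc, x, hxc, hcx, rfl⟩
    have hT : touchSetB n x ⊆ range n := filter_subset _ _
    obtain rfl := hxc.unique (isPseudocomplementB_regularB hn x)
    exact ⟨touchSetB n x, hT, (hcx.unique (isPseudocomplementB_sdiff_regularB hn hT)).symm⟩
  · rintro ⟨S, hS, rfl⟩
    exact ⟨isHeightSeqB_regularB hn hS, _, _, isPseudocomplementB_regularB_sdiff hn hS,
      isPseudocomplementB_sdiff_regularB hn hS, rfl⟩

theorem injOn_regularB (n : ℕ) : Set.InjOn (regularB n) ↑(range n).powerset := by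
  intro S hS T hT he
  rw [← touchSetB_regularB (mem_powerset.mp hS), he, touchSetB_regularB (mem_powerset.mp hT)]

theorem card_regular_dyckB (n : ℕ) (hn : 0 < n) :
    {h : List ℕ | IsHeightSeqB n h ∧
      ∃ hc hcc : List ℕ, IsPseudocomplementB n h hc ∧
        IsPseudocomplementB n hc hcc ∧ hcc = h}.ncard = 2 ^ n := by
  rw [setOf_regular_eq_image_regularB hn, (injOn_regularB n).ncard_image, Set.ncard_coe_finset,
    card_powerset, card_range]
end
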